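/- arXiv:2310.09230 — 2 statements merged into one kernel-verified Lean document; each statement's English description precedes it below -/
import Mathlib

section
/- A reverse plane partition n of shape λ admits a complete factorisation (a factorisation into Young indicators in which every indicator appearing with nonzero coefficient is the indicator of an upper set with a unique minimum) if and only if the derivative Δn is nonnegative on every box of λ. Moreover, in that case the complete factorisation is n = Σ_{(i,j)∈λ} Δn(i,j)·χ_{U_{(i,j)}}, where U_{(i,j)} is the upper set of λ with unique minimum (i,j). -/
open scoped Classical

/-- A Young diagram: a finite subset of ℕ² closed under decreasing either coordinate. -/
def IsYoung (lam : Finset (ℕ × ℕ)) : Prop :=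
  ∀ i j : ℕ, ((i + 1, j) ∈ lam → (i, j) ∈ lam) ∧ ((i, j + 1) ∈ lam → (i, j) ∈ lam)

/-- A reverse plane partition of shape `lam`: a function vanishing off `lam` and
monotone on `lam` for the componentwise order. -/
def IsRPP (lam : Finset (ℕ × ℕ)) (n : ℕ × ℕ → ℕ) : Prop :=
  (∀ b, b ∉ lam → n b = 0) ∧
  ∀ b ∈ lam, ∀ b' ∈ lam, b ≤ b' → n b ≤ n b'

/-- An upper set of the Young diagram `lam`. -/
def IsUpper (lam U : Finset (ℕ × ℕ)) : Prop :=
  U ⊆ lam ∧ ∀ b ∈ U, ∀ b' ∈ lam, b ≤ b' → b' ∈ U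

/-- Edge-adjacency of boxes: they differ by 1 in exactly one coordinate. -/
def Adj (a b : ℕ × ℕ) : Prop :=
  (a.1 = b.1 ∧ (a.2 = b.2 + 1 ∨ b.2 = a.2 + 1)) ∨
  (a.2 = b.2 ∧ (a.1 = b.1 + 1 ∨ b.1 = a.1 + 1))

/-- A subset `V` is connected: any two boxes are joined by a path of boxes of `V`
whose consecutive boxes are edge-adjacent. -/
def ConnectedIn (V : Finset (ℕ × ℕ)) : Prop :=
  ∀ a ∈ V, ∀ b ∈ V,
    Relation.ReflTransGen (fun x y => x ∈ V ∧ y ∈ V ∧ Adj x y) a b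

/-- Characteristic function of a finite set of boxes. -/
def boxIndicator (U : Finset (ℕ × ℕ)) : ℕ × ℕ → ℕ :=
  fun b => if b ∈ U then 1 else 0

/-- A Young indicator: characteristic function of a nonempty connected upper set. -/
def IsYoungIndicator (lam : Finset (ℕ × ℕ)) (ν : ℕ × ℕ → ℕ) : Prop :=
  ∃ U : Finset (ℕ × ℕ), IsUpper lam U ∧ U.Nonempty ∧ ConnectedIn U ∧
    ν = boxIndicator U

/-- The derivative Δn(i,j) = n(i,j) − n(i−1,j) − n(i,j−1) + n(i−1,j−1),
with `n` extended by zero outside ℕ². -/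
def delta (n : ℕ × ℕ → ℕ) : ℕ × ℕ → ℤ := fun b =>
  (n b : ℤ)
  - (if b.1 = 0 then 0 else (n (b.1 - 1, b.2) : ℤ))
  - (if b.2 = 0 then 0 else (n (b.1, b.2 - 1) : ℤ))
  + (if b.1 = 0 ∨ b.2 = 0 then 0 else (n (b.1 - 1, b.2 - 1) : ℤ))

/-- The weight ω(n) = Σ_{b∈λ} Δn(b). -/
def weight (lam : Finset (ℕ × ℕ)) (n : ℕ × ℕ → ℕ) : ℤ :=
  ∑ b ∈ lam, delta n b

/-- A factorisation of `n` into Young indicators, recorded as a finitely supported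
function assigning multiplicities to (the upper sets underlying) Young indicators. -/
def IsFactorisation (lam : Finset (ℕ × ℕ)) (n : ℕ × ℕ → ℕ)
    (T : Finset (ℕ × ℕ) →₀ ℕ) : Prop :=
  (∀ U ∈ T.support, IsUpper lam U ∧ U.Nonempty ∧ ConnectedIn U) ∧
  ∀ b, n b = ∑ U ∈ T.support, T U * boxIndicator U b

lemma young_down {lam : Finset (ℕ × ℕ)} (hlam : IsYoung lam) :
    ∀ {b c : ℕ × ℕ}, b ∈ lam → c ≤ b → c ∈ lam := by
  have h1 : ∀ k i j, (i + k, j) ∈ lam → (i, j) ∈ lam := by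
    intro k
    induction k with
    | zero => intro i j h; simpa using h
    | succ k ih => intro i j h; exact ih i j ((hlam (i+k) j).1 h)
  have h2 : ∀ k i j, (i, j + k) ∈ lam → (i, j) ∈ lam := by
    intro k
    induction k with
    | zero => intro i j h; simpa using h
    | succ k ih => intro i j h; exact ih i j ((hlam i (j+k)).2 h)
  rintro ⟨b1, b2⟩ ⟨c1, c2⟩ hb ⟨hc1, hc2⟩
  simp only at hc1 hc2
  obtain ⟨k1, rfl⟩ := Nat.le.dest hc1
  obtain ⟨k2, rfl⟩ := Nat.le.dest hc2
  exact h2 k2 c1 c2 (h1 k1 c1 (c2 + k2) hb)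

lemma telescope (f : ℕ → ℤ) (J : ℕ) :
    ∑ j ∈ Finset.range (J+1), (f j - (if j = 0 then (0:ℤ) else f (j-1))) = f J := by
  induction J with
  | zero => simp
  | succ J ih => rw [Finset.sum_range_succ, ih]; simp

lemma delta_split (n : ℕ × ℕ → ℕ) (i j : ℕ) :
    delta n (i,j) = ((n (i,j):ℤ) - if i = 0 then 0 else (n (i-1,j):ℤ))
      - (if j = 0 then 0 else ((n (i,j-1):ℤ) - if i = 0 then 0 else (n (i-1,j-1):ℤ))) := by
  simp only [delta]
  by_cases hi : i = 0 <;> by_cases hj : j = 0 <;> simp [hi, hj] <;> ring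

lemma rect_sum (n : ℕ × ℕ → ℕ) (I J : ℕ) :
    ∑ c ∈ Finset.range (I+1) ×ˢ Finset.range (J+1), delta n c = (n (I,J) : ℤ) := by
  rw [Finset.sum_product]
  have inner : ∀ i, ∑ j ∈ Finset.range (J+1), delta n (i, j)
      = (n (i,J):ℤ) - (if i = 0 then 0 else (n (i-1,J):ℤ)) := by
    intro i
    have := telescope (fun j => (n (i,j):ℤ) - if i = 0 then 0 else (n (i-1,j):ℤ)) J
    rw [← this]
    exact Finset.sum_congr rfl fun j _ => delta_split n i j
  calc ∑ i ∈ Finset.range (I+1), ∑ j ∈ Finset.range (J+1), delta n (i, j)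
      = ∑ i ∈ Finset.range (I+1), ((n (i,J):ℤ) - if i = 0 then 0 else (n (i-1,J):ℤ)) :=
        Finset.sum_congr rfl fun i _ => inner i
    _ = (n (I,J):ℤ) := telescope (fun i => (n (i,J):ℤ)) I

lemma expand {lam : Finset (ℕ × ℕ)} (hlam : IsYoung lam) {n : ℕ × ℕ → ℕ}
    (hn0 : ∀ b, b ∉ lam → n b = 0) (b : ℕ × ℕ) :
    (n b : ℤ) = ∑ c ∈ lam, delta n c * (boxIndicator (lam.filter (fun a => c ≤ a)) b : ℤ) := by
  by_cases hb : b ∈ lam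
  · have hrect : lam.filter (fun c => c ≤ b) = Finset.range (b.1+1) ×ˢ Finset.range (b.2+1) := by
      ext c
      simp only [Finset.mem_filter, Finset.mem_product, Finset.mem_range, Nat.lt_succ_iff,
        Prod.le_def]
      constructor
      · rintro ⟨-, h⟩; exact h
      · intro h; exact ⟨young_down hlam hb h, h⟩
    calc (n b : ℤ) = ∑ c ∈ Finset.range (b.1+1) ×ˢ Finset.range (b.2+1), delta n c := by
          rw [rect_sum]
      _ = ∑ c ∈ lam.filter (fun c => c ≤ b), delta n c := by rw [hrect]
      _ = ∑ c ∈ lam, if c ≤ b then delta n c else 0 := Finset.sum_filter _ _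
      _ = _ := by
          refine Finset.sum_congr rfl fun c _ => ?_
          simp only [boxIndicator, Finset.mem_filter]
          by_cases h : c ≤ b
          · simp [h, hb]
          · simp [h]
  · rw [hn0 b hb]
    symm
    push_cast
    refine Finset.sum_eq_zero fun c _ => ?_
    simp [boxIndicator, Finset.mem_filter, hb]

lemma conn {lam : Finset (ℕ × ℕ)} (hlam : IsYoung lam) {c : ℕ × ℕ} :
    ConnectedIn (lam.filter (fun a => c ≤ a)) := by
  set U := lam.filter (fun a => c ≤ a) with hU
  have key : ∀ N (b : ℕ × ℕ), b.1 + b.2 ≤ N → b ∈ U →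
      Relation.ReflTransGen (fun x y => x ∈ U ∧ y ∈ U ∧ Adj x y) b c := by
    intro N
    induction N with
    | zero =>
      intro b hN hb
      have hb' := Finset.mem_filter.1 hb
      have : b = c := by
        have := hb'.2
        have h1 : b.1 = 0 := by omega
        have h2 : b.2 = 0 := by omega
        have : c.1 = 0 ∧ c.2 = 0 := by
          rcases hb'.2 with ⟨u, v⟩; omega
        ext <;> omega
      rw [this]
    | succ N ih =>
      intro b hN hb
      have hb' := Finset.mem_filter.1 hb
      rcases eq_or_ne b c with rfl | hne
      · rfl
      · have hlt : c.1 < b.1 ∨ c.2 < b.2 := by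
          rcases hb'.2 with ⟨u, v⟩
          rcases Nat.lt_or_ge c.1 b.1 with h | h
          · exact Or.inl h
          · rcases Nat.lt_or_ge c.2 b.2 with h2 | h2
            · exact Or.inr h2
            · exact absurd (Prod.ext (by omega) (by omega)) hne
        rcases hlt with h | h
        · set b' : ℕ × ℕ := (b.1 - 1, b.2) with hb'def
          have hb'lam : b' ∈ lam := by
            have : (b.1 - 1 + 1, b.2) ∈ lam := by
              have : b.1 - 1 + 1 = b.1 := by omega
              rw [this]; exact hb'.1
            exact (hlam (b.1-1) b.2).1 this
          have hb'U : b' ∈ U := Finset.mem_filter.2 ⟨hb'lam, by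
            rcases hb'.2 with ⟨u, v⟩; exact ⟨by simp [hb'def]; omega, by simp [hb'def]; omega⟩⟩
          have hadj : Adj b b' := Or.inr ⟨rfl, Or.inl (by simp [hb'def]; omega)⟩
          exact Relation.ReflTransGen.head ⟨hb, hb'U, hadj⟩
            (ih b' (by simp [hb'def]; omega) hb'U)
        · set b' : ℕ × ℕ := (b.1, b.2 - 1) with hb'def
          have hb'lam : b' ∈ lam := by
            have : (b.1, b.2 - 1 + 1) ∈ lam := by
              have : b.2 - 1 + 1 = b.2 := by omega
              rw [this]; exact hb'.1
            exact (hlam b.1 (b.2-1)).2 this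
          have hb'U : b' ∈ U := Finset.mem_filter.2 ⟨hb'lam, by
            rcases hb'.2 with ⟨u, v⟩; exact ⟨by simp [hb'def]; omega, by simp [hb'def]; omega⟩⟩
          have hadj : Adj b b' := Or.inl ⟨rfl, Or.inl (by simp [hb'def]; omega)⟩
          exact Relation.ReflTransGen.head ⟨hb, hb'U, hadj⟩
            (ih b' (by simp [hb'def]; omega) hb'U)
  have hsymm : Symmetric (fun x y => x ∈ U ∧ y ∈ U ∧ Adj x y) := by
    rintro x y ⟨hx, hy, hadj⟩
    refine ⟨hy, hx, ?_⟩
    rcases hadj with ⟨h1, h2⟩ | ⟨h1, h2⟩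
    · exact Or.inl ⟨h1.symm, h2.symm⟩
    · exact Or.inr ⟨h1.symm, h2.symm⟩
  intro a ha b hb
  exact (key (a.1+a.2) a le_rfl ha).trans
    ((@Relation.ReflTransGen.symmetric _ _ ⟨hsymm⟩).symm _ _ (key (b.1+b.2) b le_rfl hb))

lemma delta_ind_nonneg {lam U : Finset (ℕ × ℕ)} (hlam : IsYoung lam)
    (hU : IsUpper lam U) {m : ℕ × ℕ} (hm : m ∈ U) (hmin : ∀ b ∈ U, m ≤ b)
    {b : ℕ × ℕ} (hb : b ∈ lam) : 0 ≤ delta (boxIndicator U) b := by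
  obtain ⟨hUsub, hUup⟩ := hU
  simp only [delta, boxIndicator]
  by_cases hbU : b ∈ U
  · by_cases hD : ¬ b.1 = 0 ∧ ¬ b.2 = 0 ∧ (b.1 - 1, b.2 - 1) ∈ U
    · -- D holds; then B and C hold
      obtain ⟨h1, h2, hD⟩ := hD
      have hmle := hmin _ hD
      have hBlam : (b.1 - 1, b.2) ∈ lam := young_down hlam hb ⟨by dsimp; omega, by dsimp; omega⟩
      have hClam : (b.1, b.2 - 1) ∈ lam := young_down hlam hb ⟨by dsimp; omega, by dsimp; omega⟩
      have hB : (b.1 - 1, b.2) ∈ U := hUup _ hD _ hBlam ⟨le_rfl, by dsimp; omega⟩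
      have hC : (b.1, b.2 - 1) ∈ U := hUup _ hD _ hClam ⟨by dsimp; omega, le_rfl⟩
      simp [hbU, h1, h2, hB, hC, hD]
    · -- D fails: show not both B and C
      have hBC : ¬ ((¬ b.1 = 0 ∧ (b.1 - 1, b.2) ∈ U) ∧ (¬ b.2 = 0 ∧ (b.1, b.2 - 1) ∈ U)) := by
        rintro ⟨⟨h1, hB⟩, ⟨h2, hC⟩⟩
        apply hD
        refine ⟨h1, h2, ?_⟩
        have hm1 := hmin _ hB
        have hm2 := hmin _ hC
        have hDlam : (b.1 - 1, b.2 - 1) ∈ lam :=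
          young_down hlam hb ⟨by dsimp; omega, by dsimp; omega⟩
        refine hUup _ hm _ hDlam ⟨?_, ?_⟩
        · rcases hm1 with ⟨u, v⟩; dsimp at u ⊢; omega
        · rcases hm2 with ⟨u, v⟩; dsimp at v ⊢; omega
      by_cases h1 : b.1 = 0 <;> by_cases h2 : b.2 = 0 <;>
        [skip; skip; skip; push_neg at hD] <;>
        simp_all <;> split_ifs <;> simp_all <;> omega
  · -- b ∉ U ⇒ all other terms vanish
    have hnB : ∀ h1 : ¬ b.1 = 0, (b.1 - 1, b.2) ∉ U := by
      intro h1 hB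
      exact hbU (hUup _ hB _ hb ⟨by dsimp; omega, le_rfl⟩)
    have hnC : ∀ h2 : ¬ b.2 = 0, (b.1, b.2 - 1) ∉ U := by
      intro h2 hC
      exact hbU (hUup _ hC _ hb ⟨le_rfl, by dsimp; omega⟩)
    have hnD : ∀ (_ : ¬ b.1 = 0) (_ : ¬ b.2 = 0), (b.1 - 1, b.2 - 1) ∉ U := by
      intro h1 h2 hD
      exact hbU (hUup _ hD _ hb ⟨by dsimp; omega, by dsimp; omega⟩)
    by_cases h1 : b.1 = 0 <;> by_cases h2 : b.2 = 0 <;> simp_all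

lemma delta_sum {n : ℕ × ℕ → ℕ} {T : Finset (ℕ × ℕ) →₀ ℕ}
    (hfac : ∀ b, n b = ∑ U ∈ T.support, T U * boxIndicator U b) (b : ℕ × ℕ) :
    delta n b = ∑ U ∈ T.support, (T U : ℤ) * delta (boxIndicator U) b := by
  simp only [delta]
  rw [hfac b, hfac (b.1 - 1, b.2), hfac (b.1, b.2 - 1), hfac (b.1 - 1, b.2 - 1)]
  push_cast
  split_ifs <;>
    first
      | (exfalso; tauto)
      | (simp only [mul_sub, mul_add, mul_zero, Finset.sum_sub_distrib, Finset.sum_add_distrib,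
          Finset.sum_const_zero]; try ring)


/-- `n` admits a complete factorisation (every indicator appearing is the
indicator of an upper set with a unique minimum) iff Δn is nonnegative on λ;
moreover in that case n = Σ_{c∈λ} Δn(c)·χ_{U_c}, where U_c = {b ∈ λ : b ≥ c}. -/
theorem stmt11 (lam : Finset (ℕ × ℕ)) (hlam : IsYoung lam)
    (n : ℕ × ℕ → ℕ) (hn : IsRPP lam n) :
    ((∃ T : Finset (ℕ × ℕ) →₀ ℕ, IsFactorisation lam n T ∧
        ∀ U ∈ T.support, ∃ m ∈ U, ∀ b ∈ U, m ≤ b) ↔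
      ∀ b ∈ lam, 0 ≤ delta n b) ∧
    ((∀ b ∈ lam, 0 ≤ delta n b) →
      ∀ b, (n b : ℤ) = ∑ c ∈ lam,
        delta n c * (boxIndicator (lam.filter (fun a => c ≤ a)) b : ℤ)) := by

  have part2 : ∀ b, (n b : ℤ) = ∑ c ∈ lam,
      delta n c * (boxIndicator (lam.filter (fun a => c ≤ a)) b : ℤ) :=
    fun b => expand hlam hn.1 b
  refine ⟨⟨?_, ?_⟩, fun _ b => part2 b⟩
  · rintro ⟨T, hfac, hmin⟩ b hb
    rw [delta_sum hfac.2 b]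
    refine Finset.sum_nonneg fun U hU => ?_
    obtain ⟨m, hmU, hmmin⟩ := hmin U hU
    exact mul_nonneg (by positivity) (delta_ind_nonneg hlam (hfac.1 U hU).1 hmU hmmin hb)
  · intro hd
    classical
    set Uc : ℕ × ℕ → Finset (ℕ × ℕ) := fun c => lam.filter (fun a => c ≤ a) with hUcdef
    set d : ℕ × ℕ → ℕ := fun c => (delta n c).toNat with hddef
    set T : Finset (ℕ × ℕ) →₀ ℕ := ∑ c ∈ lam, Finsupp.single (Uc c) (d c) with hTdef
    have hmemUc : ∀ c ∈ lam, c ∈ Uc c := fun c hc => Finset.mem_filter.2 ⟨hc, le_rfl⟩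
    have hinj : ∀ c ∈ lam, ∀ c' ∈ lam, Uc c = Uc c' → c = c' := by
      intro c hc c' hc' h
      have h1 : c ∈ Uc c' := h ▸ hmemUc c hc
      have h2 : c' ∈ Uc c := h.symm ▸ hmemUc c' hc'
      exact le_antisymm (Finset.mem_filter.1 h2).2 (Finset.mem_filter.1 h1).2
    have hsupp : T.support ⊆ lam.image Uc := by
      refine Finsupp.support_finset_sum.trans ?_
      intro U hU
      simp only [Finset.mem_biUnion] at hU
      obtain ⟨c, hc, hcs⟩ := hU
      have := Finsupp.support_single_subset hcs
      exact Finset.mem_image.2 ⟨c, hc, (Finset.mem_singleton.1 this).symm⟩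
    have hTval : ∀ c ∈ lam, T (Uc c) = d c := by
      intro c hc
      rw [hTdef, Finsupp.finset_sum_apply]
      rw [Finset.sum_eq_single c]
      · simp [Finsupp.single_apply]
      · intro c' hc' hne
        rw [Finsupp.single_apply, if_neg]
        exact fun h => hne (hinj c' hc' c hc h)
      · intro h; exact absurd hc h
    have hsum : ∀ b, n b = ∑ U ∈ T.support, T U * boxIndicator U b := by
      intro b
      have h1 : ∑ U ∈ T.support, T U * boxIndicator U b
          = ∑ c ∈ lam, d c * boxIndicator (Uc c) b := by
        rw [Finset.sum_subset hsupp (fun U _ hU => by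
          rw [Finsupp.notMem_support_iff.1 hU, zero_mul])]
        rw [Finset.sum_image hinj]
        exact Finset.sum_congr rfl fun c hc => by rw [hTval c hc]
      rw [h1]
      have hz : ((n b : ℤ)) = ∑ c ∈ lam, (d c : ℤ) * (boxIndicator (Uc c) b : ℤ) := by
        rw [part2 b]
        refine Finset.sum_congr rfl fun c hc => ?_
        rw [hddef]
        rw [Int.toNat_of_nonneg (hd c hc)]
      exact_mod_cast hz
    refine ⟨T, ⟨?_, hsum⟩, ?_⟩
    · intro U hU
      obtain ⟨c, hc, rfl⟩ := Finset.mem_image.1 (hsupp hU)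
      refine ⟨⟨Finset.filter_subset _ _, ?_⟩, ⟨c, hmemUc c hc⟩, conn hlam⟩
      intro b hb b' hb' hle
      exact Finset.mem_filter.2 ⟨hb', le_trans (Finset.mem_filter.1 hb).2 hle⟩
    · intro U hU
      obtain ⟨c, hc, rfl⟩ := Finset.mem_image.1 (hsupp hU)
      exact ⟨c, hmemUc c hc, fun b hb => (Finset.mem_filter.1 hb).2⟩
end

section
/- Let n be a reverse plane partition of shape λ with standard factorisation n = Σ_{s=1}^t Σ_{i=1}^{r_s} (k_s − k_{s−1})·χ_{U_{s,i}}, where {k₁ < ⋯ < k_t} is the image of n, k₀ = 0, V_s = n⁻¹({k_s,…,k_t}), and U_{s,1},…,U_{s,r_s} are the connected components of V_s. Then the Young indicators χ_{U_{s,i}} appearing in the standard factorisation are linearly independent over ℤ: any relation Σ_{s,i} m_{s,i}·χ_{U_{s,i}} = 0 with m_{s,i} ∈ ℤ forces all m_{s,i} = 0. -/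
open scoped Classical

/-- The connected component of the box `b` inside the finite set `U`. -/
noncomputable def component (U : Finset (ℕ × ℕ)) (b : ℕ × ℕ) : Finset (ℕ × ℕ) :=
  U.filter (fun a => Relation.ReflTransGen (fun x y => x ∈ U ∧ y ∈ U ∧ Adj x y) b a)

lemma adj_symm' {a b : ℕ × ℕ} (h : Adj a b) : Adj b a := by
  unfold Adj at *; tauto

lemma mem_component' {V : Finset (ℕ × ℕ)} {b a : ℕ × ℕ} :
    a ∈ component V b ↔ a ∈ V ∧
      Relation.ReflTransGen (fun x y => x ∈ V ∧ y ∈ V ∧ Adj x y) b a := by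
  simp [component]

lemma reach_symm' (V : Finset (ℕ × ℕ)) :
    Symmetric (Relation.ReflTransGen (fun x y : ℕ × ℕ => x ∈ V ∧ y ∈ V ∧ Adj x y)) :=
  fun a b h => (@Relation.ReflTransGen.stdSymm _ _ ⟨fun _ _ h => ⟨h.2.1, h.1, adj_symm' h.2.2⟩⟩).symm a b h

lemma component_eq_of_mem' {V : Finset (ℕ × ℕ)} {b c : ℕ × ℕ}
    (h : b ∈ component V c) : component V c = component V b := by
  rw [mem_component'] at h
  ext a
  rw [mem_component', mem_component']
  exact ⟨fun ⟨ha, hr⟩ => ⟨ha, (reach_symm' V h.2).trans hr⟩,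
    fun ⟨ha, hr⟩ => ⟨ha, h.2.trans hr⟩⟩

lemma component_subset' {V : Finset (ℕ × ℕ)} (c : ℕ × ℕ) : component V c ⊆ V :=
  Finset.filter_subset _ _

lemma self_mem_component' {V : Finset (ℕ × ℕ)} {c : ℕ × ℕ} (h : c ∈ V) :
    c ∈ component V c :=
  mem_component'.2 ⟨h, Relation.ReflTransGen.refl⟩

/-- If `b` lies in the component `component V c` and that component is contained in
`V'`, and `b` also lies in `component V' c'`, then the whole first component is
contained in the second. -/
lemma component_subset_component' {V V' : Finset (ℕ × ℕ)} {c c' b : ℕ × ℕ}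
    (hb : b ∈ component V c) (hU : component V c ⊆ V')
    (hb' : b ∈ component V' c') :
    component V c ⊆ component V' c' := by
  rw [component_eq_of_mem' hb] at hU ⊢
  rw [component_eq_of_mem' hb']
  have hbV : b ∈ V := (mem_component'.1 hb).1
  intro a ha
  rw [mem_component'] at ha
  obtain ⟨haV, hr⟩ := ha
  have key : ∀ x : ℕ × ℕ,
      Relation.ReflTransGen (fun x y => x ∈ V ∧ y ∈ V ∧ Adj x y) b x →
      Relation.ReflTransGen (fun x y => x ∈ V' ∧ y ∈ V' ∧ Adj x y) b x := by
    intro x hx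
    induction hx with
    | refl => exact Relation.ReflTransGen.refl
    | @tail p q hbx hxy ih =>
      have hpU : p ∈ component V b := mem_component'.2 ⟨hxy.1, hbx⟩
      have hqU : q ∈ component V b := mem_component'.2 ⟨hxy.2.1, hbx.tail hxy⟩
      exact ih.tail ⟨hU hpU, hU hqU, hxy.2.2⟩
  exact mem_component'.2 ⟨hU (mem_component'.2 ⟨haV, hr⟩), key a hr⟩

/-- The Young indicators appearing in the standard factorisation of `n`
(the connected components of the sublevel supersets V_s = {b ∈ λ : n b ≥ k s})
are linearly independent over ℤ. -/
theorem stmt15 (lam : Finset (ℕ × ℕ)) (hlam : IsYoung lam)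
    (n : ℕ × ℕ → ℕ) (hn : IsRPP lam n)
    (t : ℕ) (k : ℕ → ℕ) (hk0 : k 0 = 0)
    (hk : StrictMonoOn k (Set.Icc 1 t))
    (himg : ∀ v, (∃ b ∈ lam, n b = v) ↔ ∃ h ∈ Finset.Icc 1 t, k h = v)
    (m : Finset (ℕ × ℕ) → ℤ)
    (hrel : ∀ b ∈ lam,
      ∑ U ∈ (Finset.Icc 1 t).biUnion (fun s =>
          (lam.filter (fun c => k s ≤ n c)).image
            (component (lam.filter (fun c => k s ≤ n c)))),
        m U * (boxIndicator U b : ℤ) = 0) :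
    ∀ U ∈ (Finset.Icc 1 t).biUnion (fun s =>
        (lam.filter (fun c => k s ≤ n c)).image
          (component (lam.filter (fun c => k s ≤ n c)))),
      m U = 0 := by
  set F := (Finset.Icc 1 t).biUnion (fun s =>
      (lam.filter (fun c => k s ≤ n c)).image
        (component (lam.filter (fun c => k s ≤ n c)))) with hF
  have hmemF : ∀ U : Finset (ℕ × ℕ), U ∈ F ↔
      ∃ s ∈ Finset.Icc 1 t, ∃ c ∈ lam.filter (fun c => k s ≤ n c),
        component (lam.filter (fun c => k s ≤ n c)) c = U := by
    intro U
    simp [hF, Finset.mem_biUnion, Finset.mem_image]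
  have hsub_lam : ∀ U ∈ F, U ⊆ lam := by
    intro U hU
    obtain ⟨s, _, c, _, rfl⟩ := (hmemF U).1 hU
    exact (component_subset' c).trans (Finset.filter_subset _ _)
  -- key step: if all strict supersets of U in F have coefficient 0, so does U
  have key : ∀ U ∈ F, (∀ W ∈ F, U ⊂ W → m W = 0) → m U = 0 := by
    intro U hUF hind
    obtain ⟨s, hs, c, hc, hUeq⟩ := (hmemF U).1 hUF
    rw [Finset.mem_filter] at hc
    -- pick a minimal point of n on U
    have hne : U.Nonempty := ⟨c, hUeq ▸ self_mem_component' (Finset.mem_filter.2 hc)⟩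
    obtain ⟨b, hbU, hbmin⟩ := U.exists_min_image n hne
    have hblam : b ∈ lam := hsub_lam U hUF hbU
    -- b belongs to a member W of F iff U ⊆ W
    have hmem_iff : ∀ W ∈ F, (b ∈ W ↔ U ⊆ W) := by
      intro W hWF
      constructor
      · intro hbW
        obtain ⟨s', _, c', _, hWeq⟩ := (hmemF W).1 hWF
        have hksb : k s' ≤ n b := by
          have := (component_subset' c') (hWeq ▸ hbW)
          exact (Finset.mem_filter.1 this).2
        have hUsub : U ⊆ lam.filter (fun c => k s' ≤ n c) := by
          intro a haU
          exact Finset.mem_filter.2 ⟨hsub_lam U hUF haU, le_trans hksb (hbmin a haU)⟩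
        subst hUeq; subst hWeq
        exact component_subset_component' hbU hUsub hbW
      · intro hUW; exact hUW hbU
    -- evaluate the relation at b
    have h0 := hrel b hblam
    have hsum : ∑ W ∈ F, m W * (boxIndicator W b : ℤ)
        = ∑ W ∈ F.filter (fun W => U ⊆ W), m W := by
      rw [Finset.sum_filter]
      refine Finset.sum_congr rfl ?_
      intro W hW
      by_cases hbW : b ∈ W
      · simp [boxIndicator, hbW, (hmem_iff W hW).1 hbW]
      · have : ¬ U ⊆ W := fun h => hbW ((hmem_iff W hW).2 h)
        simp [boxIndicator, hbW, this]
    rw [hsum] at h0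
    have hUfil : U ∈ F.filter (fun W => U ⊆ W) :=
      Finset.mem_filter.2 ⟨hUF, le_refl U⟩
    rw [← Finset.add_sum_erase _ _ hUfil] at h0
    have hz : ∑ W ∈ (F.filter (fun W => U ⊆ W)).erase U, m W = 0 := by
      refine Finset.sum_eq_zero ?_
      intro W hW
      have hWne := Finset.ne_of_mem_erase hW
      have hW' := Finset.mem_of_mem_erase hW
      rw [Finset.mem_filter] at hW'
      exact hind W hW'.1 (lt_of_le_of_ne hW'.2 (Ne.symm hWne))
    rw [hz, add_zero] at h0
    exact h0
  -- downward strong induction on cardinality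
  have main : ∀ d : ℕ, ∀ U ∈ F, lam.card - U.card < d → m U = 0 := by
    intro d
    induction d with
    | zero => intro U hU h; omega
    | succ d ih =>
      intro U hU h
      refine key U hU ?_
      intro W hW hUW
      refine ih W hW ?_
      have h1 := Finset.card_lt_card hUW
      have h2 := Finset.card_le_card (hsub_lam W hW)
      omega
  intro U hU
  exact main (lam.card + 1) U hU (by omega)
end
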